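/- In the ring ℚ[[X]] of formal power series, let C be the unique power series satisfying C = 1 + X²·C² (the generating function of the Catalan numbers in X²), and let H = Σ_{n≥0} h_n Xⁿ where h_n is the number of 1-horizontal Dyck paths of length n. Then H·(1 − X − X² − X²·C) = 1 − X − X²·C. -/
import Mathlib


open PowerSeries

/-- Validity of a 1-horizontal Dyck path starting from altitude `h`: steps are
`+1`, `-1` (only from altitude `≥ 1`), and a horizontal step `0` allowed
exactly at altitude `1`. -/
def HValidFrom : ℤ → List ℤ → Prop
  | _, [] => True
  | h, s :: r =>
    (s = 1 ∨ (s = -1 ∧ 1 ≤ h) ∨ (s = 0 ∧ h = 1)) ∧ HValidFrom (h + s) r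

/-- `l` is a 1-horizontal Dyck path of length `n`. -/
def HDyck (n : ℕ) (l : List ℤ) : Prop :=
  l.length = n ∧ HValidFrom 0 l ∧ l.sum = 0

/-- The number `h n` of 1-horizontal Dyck paths of length `n`. -/
noncomputable def hCount (n : ℕ) : ℕ := Nat.card {l : List ℤ // HDyck n l}

/-- The generating function `H = ∑ h_n Xⁿ` of 1-horizontal Dyck paths. -/
noncomputable def H : PowerSeries ℚ := PowerSeries.mk fun n => (hCount n : ℚ)

/-- Finset of valid paths of length `n` from altitude `h` ending at `0`. -/
def G : ℕ → ℕ → Finset (List ℤ)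
  | 0, h => if h = 0 then {([] : List ℤ)} else ∅
  | n+1, h =>
      ((G n (h+1)).image (fun l => (1:ℤ) :: l) ∪
        (if 1 ≤ h then (G n (h-1)).image (fun l => (-1:ℤ) :: l) else ∅)) ∪
      (if h = 1 then (G n 1).image (fun l => (0:ℤ) :: l) else ∅)

/-- The count recursion. -/
def f : ℕ → ℕ → ℕ
  | 0, h => if h = 0 then 1 else 0
  | n+1, h => (f n (h+1) + (if 1 ≤ h then f n (h-1) else 0)) + (if h = 1 then f n 1 else 0)

lemma mem_G : ∀ (n h : ℕ) (l : List ℤ),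
    l ∈ G n h ↔ (l.length = n ∧ HValidFrom (h : ℤ) l ∧ l.sum = -(h : ℤ)) := by
  intro n
  induction n with
  | zero =>
      intro h l
      cases l with
      | nil =>
          simp [G, HValidFrom]
          split_ifs with h0 <;> simp [h0] <;> omega
      | cons s r => simp [G]; split_ifs <;> simp
  | succ n ih =>
      intro h l
      cases l with
      | nil =>
          simp [G]
          split_ifs <;> simp
      | cons s r =>
          have hmem : (s :: r) ∈ G (n+1) h ↔
              ((s = 1 ∧ r ∈ G n (h+1)) ∨ (1 ≤ h ∧ s = -1 ∧ r ∈ G n (h-1))) ∨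
                (h = 1 ∧ s = 0 ∧ r ∈ G n 1) := by
            simp only [G, Finset.mem_union]
            constructor
            · rintro ((h1 | h2) | h3)
              · simp only [Finset.mem_image] at h1
                obtain ⟨a, ha, he⟩ := h1
                cases he; exact Or.inl (Or.inl ⟨rfl, ha⟩)
              · split_ifs at h2 with hh
                · simp only [Finset.mem_image] at h2
                  obtain ⟨a, ha, he⟩ := h2
                  cases he; exact Or.inl (Or.inr ⟨hh, rfl, ha⟩)
                · simp at h2
              · split_ifs at h3 with hh
                · simp only [Finset.mem_image] at h3
                  obtain ⟨a, ha, he⟩ := h3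
                  cases he; exact Or.inr ⟨hh, rfl, ha⟩
                · simp at h3
            · rintro ((⟨rfl, hr⟩ | ⟨hh, rfl, hr⟩) | ⟨hh, rfl, hr⟩)
              · exact Or.inl (Or.inl (Finset.mem_image_of_mem _ hr))
              · refine Or.inl (Or.inr ?_)
                rw [if_pos hh]
                exact Finset.mem_image_of_mem _ hr
              · refine Or.inr ?_
                rw [if_pos hh]
                exact Finset.mem_image_of_mem _ hr
          rw [hmem]
          simp only [ih, List.length_cons, List.sum_cons, HValidFrom]
          constructor
          · rintro ((⟨rfl, hl, hv, hs⟩ | ⟨hh, rfl, hl, hv, hs⟩) | ⟨hh, rfl, hl, hv, hs⟩)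
            · refine ⟨by omega, ⟨Or.inl rfl, ?_⟩, by push_cast at hs ⊢; omega⟩
              have e : ((h + 1 : ℕ) : ℤ) = (h : ℤ) + 1 := by push_cast; ring
              rwa [e] at hv
            · refine ⟨by omega, ⟨Or.inr (Or.inl ⟨rfl, by exact_mod_cast hh⟩), ?_⟩,
                by push_cast at hs ⊢; omega⟩
              have e : ((h - 1 : ℕ) : ℤ) = (h : ℤ) + (-1) := by omega
              rwa [e] at hv
            · subst hh
              refine ⟨by omega, ⟨Or.inr (Or.inr ⟨rfl, by norm_num⟩), ?_⟩,
                by push_cast at hs ⊢; omega⟩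
              have e : ((1 : ℕ) : ℤ) = ((1 : ℕ) : ℤ) + 0 := by norm_num
              rwa [← e]
          · rintro ⟨hl, ⟨(rfl | ⟨rfl, hh⟩ | ⟨rfl, hh⟩), hv⟩, hs⟩
            · refine Or.inl (Or.inl ⟨rfl, by omega, ?_, by push_cast at hs ⊢; omega⟩)
              have e : ((h + 1 : ℕ) : ℤ) = (h : ℤ) + 1 := by push_cast; ring
              rwa [← e] at hv
            · have hh' : 1 ≤ h := by exact_mod_cast hh
              refine Or.inl (Or.inr ⟨hh', rfl, by omega, ?_, by push_cast at hs ⊢; omega⟩)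
              have e : ((h - 1 : ℕ) : ℤ) = (h : ℤ) + (-1) := by omega
              rwa [← e] at hv
            · have hh' : h = 1 := by exact_mod_cast hh
              subst hh'
              refine Or.inr ⟨rfl, rfl, by omega, ?_, by push_cast at hs ⊢; omega⟩
              simpa using hv

lemma card_G : ∀ (n h : ℕ), (G n h).card = f n h := by
  intro n
  induction n with
  | zero => intro h; simp only [G, f]; split_ifs <;> simp
  | succ n ih =>
      intro h
      have hinj1 : Function.Injective (fun l : List ℤ => (1:ℤ) :: l) := List.cons_injective
      have hinjm : Function.Injective (fun l : List ℤ => (-1:ℤ) :: l) := List.cons_injective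
      have hinj0 : Function.Injective (fun l : List ℤ => (0:ℤ) :: l) := List.cons_injective
      have d12 : Disjoint ((G n (h+1)).image (fun l => (1:ℤ) :: l))
          (if 1 ≤ h then (G n (h-1)).image (fun l => (-1:ℤ) :: l) else ∅) := by
        split_ifs
        · rw [Finset.disjoint_left]
          rintro x hx hy
          simp only [Finset.mem_image] at hx hy
          obtain ⟨a, _, rfl⟩ := hx
          obtain ⟨b, _, hb⟩ := hy
          simp at hb
        · simp
      have d3 : Disjoint
          ((G n (h+1)).image (fun l => (1:ℤ) :: l) ∪
            (if 1 ≤ h then (G n (h-1)).image (fun l => (-1:ℤ) :: l) else ∅))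
          (if h = 1 then (G n 1).image (fun l => (0:ℤ) :: l) else ∅) := by
        rw [Finset.disjoint_left]
        intro x hx hy
        split_ifs at hy with hh
        · simp only [Finset.mem_image] at hy
          obtain ⟨b, _, rfl⟩ := hy
          rw [Finset.mem_union] at hx
          rcases hx with hx | hx
          · simp only [Finset.mem_image] at hx
            obtain ⟨a, _, ha⟩ := hx; simp at ha
          · rw [if_pos (by omega : 1 ≤ h)] at hx
            simp only [Finset.mem_image] at hx
            obtain ⟨a, _, ha⟩ := hx; simp at ha
        · simp at hy
      rw [G, f, Finset.card_union_of_disjoint d3, Finset.card_union_of_disjoint d12,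
        Finset.card_image_of_injective _ hinj1]
      congr 1
      · congr 1
        · exact ih _
        · split_ifs
          · rw [Finset.card_image_of_injective _ hinjm, ih]
          · simp
      · split_ifs
        · rw [Finset.card_image_of_injective _ hinj0, ih]
        · simp

lemma hCount_eq (n : ℕ) : hCount n = f n 0 := by
  rw [hCount, ← card_G n 0, ← Nat.card_eq_finsetCard]
  apply Nat.card_congr
  apply Equiv.subtypeEquivRight
  intro l
  rw [mem_G, HDyck]
  norm_num

/-- Generating function of paths from altitude `h` to `0`. -/
noncomputable def Fh (h : ℕ) : PowerSeries ℚ := PowerSeries.mk fun n => (f n h : ℚ)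

lemma H_eq : H = Fh 0 := by
  ext n
  simp [H, Fh, hCount_eq]

lemma FL1 : Fh 0 = 1 + X * Fh 1 := by
  ext n
  cases n with
  | zero => simp [Fh, f, coeff_zero_eq_constantCoeff, map_add, map_mul]
  | succ n => simp [Fh, f, map_add, coeff_succ_X_mul, coeff_one]

lemma FL2 : Fh 1 = X * (Fh 2 + Fh 0 + Fh 1) := by
  ext n
  cases n with
  | zero => simp [Fh, f, coeff_zero_eq_constantCoeff, map_mul]
  | succ n => simp [Fh, f, map_add, coeff_succ_X_mul]

lemma FL3 (k : ℕ) : Fh (k+2) = X * (Fh (k+3) + Fh (k+1)) := by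
  ext n
  cases n with
  | zero => simp [Fh, f, coeff_zero_eq_constantCoeff, map_mul]
  | succ n =>
      simp only [Fh, coeff_mk, coeff_succ_X_mul, map_add, f,
        if_pos (by omega : 1 ≤ k+2), if_neg (by omega : ¬(k+2=1))]
      have : k + 2 - 1 = k + 1 := by omega
      rw [this]
      push_cast
      ring

lemma key (C : PowerSeries ℚ) (hC : C = 1 + X ^ 2 * C ^ 2) (k : ℕ) :
    (1 - X^2*C) * (Fh (k+2) - X*C*Fh (k+1)) = X * (Fh (k+3) - X*C*Fh (k+2)) := by
  linear_combination (FL3 k) - X * Fh (k+1) * hC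

lemma E_dvd (C : PowerSeries ℚ) (hC : C = 1 + X ^ 2 * C ^ 2) :
    ∀ (n k : ℕ), (X : PowerSeries ℚ)^n ∣ (Fh (k+2) - X*C*Fh (k+1)) := by
  have hu : IsUnit (1 - X^2*C : PowerSeries ℚ) := by
    rw [PowerSeries.isUnit_iff_constantCoeff]
    simp [map_pow]
  obtain ⟨u, hu⟩ := hu
  intro n
  induction n with
  | zero => intro k; simp
  | succ n ihn =>
      intro k
      have h1 : (X : PowerSeries ℚ)^(n+1) ∣ X * (Fh (k+3) - X*C*Fh (k+2)) := by
        rw [pow_succ']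
        exact mul_dvd_mul_left X (ihn (k+1))
      rw [← key C hC k] at h1
      have h2 : (Fh (k+2) - X*C*Fh (k+1)) =
          (↑u⁻¹ : PowerSeries ℚ) * ((1 - X^2*C) * (Fh (k+2) - X*C*Fh (k+1))) := by
        rw [← hu, ← mul_assoc, Units.inv_mul, one_mul]
      rw [h2]
      exact Dvd.dvd.mul_left h1 _

lemma E_zero (C : PowerSeries ℚ) (hC : C = 1 + X ^ 2 * C ^ 2) :
    Fh 2 = X * C * Fh 1 := by
  rw [← sub_eq_zero]
  ext m
  have := E_dvd C hC (m+1) 0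
  rw [PowerSeries.X_pow_dvd_iff] at this
  simpa using this m (by omega)

/-- **Continued fraction identity for 1-horizontal Dyck paths.** If `C` is the
(unique) power series with `C = 1 + X²C²` (the generating function of the
Catalan numbers in `X²`), then `H·(1 - X - X² - X²·C) = 1 - X - X²·C`. -/
theorem H_mul_eq (C : PowerSeries ℚ) (hC : C = 1 + X ^ 2 * C ^ 2) :
    H * (1 - X - X ^ 2 - X ^ 2 * C) = 1 - X - X ^ 2 * C := by
  rw [H_eq]
  have hB : Fh 1 = X * (X * C * Fh 1 + Fh 0 + Fh 1) := by
    rw [← E_zero C hC]; exact FL2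
  linear_combination (1 - X - X^2*C) * FL1 + X * hB
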